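/- arXiv:1902.02764 — 4 statements merged into one kernel-verified Lean document; each statement's English description precedes it below -/
import Mathlib

section
/- With g, α, a as above, for all x ∈ (-1,1): a''(α(x)) = ((g'(x))² - g''(x) g(x))/g(x) and (a''/a)(α(x)) = (g'(x))² - g''(x) g(x). Consequently, if 0 ≤ (g')² - g g'' ≤ C_g on (-1,1), then a is convex on ℝ and a''(y)/a(y) ≤ C_g for all y ∈ ℝ. -/
open Set MeasureTheory

theorem a_second_derivative
    (g : ℝ → ℝ)
    (hg_C2 : ContDiffOn ℝ 2 g (Ioo (-1 : ℝ) 1))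
    (hg_pos : ∀ x ∈ Ioo (-1 : ℝ) 1, 0 < g x)
    (hg_le : ∀ x ∈ Ioo (-1 : ℝ) 1, g x ≤ 1)
    (α β : ℝ → ℝ)
    (hα : ∀ x, α x = ∫ z in (0 : ℝ)..x, 1 / g z)
    (hβ_mem : ∀ y, β y ∈ Ioo (-1 : ℝ) 1)
    (hβα : ∀ x ∈ Ioo (-1 : ℝ) 1, β (α x) = x)
    (hαβ : ∀ y, α (β y) = y)
    (a : ℝ → ℝ) (ha : ∀ y, a y = 1 / g (β y)) :
    (∀ x ∈ Ioo (-1 : ℝ) 1,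
        deriv (deriv a) (α x) = ((deriv g x) ^ 2 - deriv (deriv g) x * g x) / g x ∧
        deriv (deriv a) (α x) / a (α x) = (deriv g x) ^ 2 - deriv (deriv g) x * g x) ∧
      ∀ C_g : ℝ,
        (∀ x ∈ Ioo (-1 : ℝ) 1,
            0 ≤ (deriv g x) ^ 2 - g x * deriv (deriv g) x ∧
            (deriv g x) ^ 2 - g x * deriv (deriv g) x ≤ C_g) →
        ConvexOn ℝ univ a ∧ ∀ y : ℝ, deriv (deriv a) y / a y ≤ C_g := by
  have hsopen : IsOpen (Ioo (-1 : ℝ) 1) := isOpen_Ioo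
  have hgne : ∀ x ∈ Ioo (-1 : ℝ) 1, g x ≠ 0 := fun x hx => (hg_pos x hx).ne'
  have hgcont : ContinuousOn g (Ioo (-1 : ℝ) 1) := hg_C2.continuousOn
  have hgdiff : ∀ x ∈ Ioo (-1 : ℝ) 1, HasDerivAt g (deriv g x) x := fun x hx =>
    ((hg_C2.differentiableOn (by norm_num)).differentiableAt (hsopen.mem_nhds hx)).hasDerivAt
  have hdg_C1 : ContDiffOn ℝ 1 (deriv g) (Ioo (-1 : ℝ) 1) :=
    hg_C2.deriv_of_isOpen hsopen (by norm_num)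
  have hdgdiff : ∀ x ∈ Ioo (-1 : ℝ) 1, HasDerivAt (deriv g) (deriv (deriv g) x) x := fun x hx =>
    ((hdg_C1.differentiableOn (by norm_num)).differentiableAt (hsopen.mem_nhds hx)).hasDerivAt
  have hinv : ContinuousOn (fun z => 1 / g z) (Ioo (-1 : ℝ) 1) :=
    continuousOn_const.div hgcont hgne
  have h0mem : (0 : ℝ) ∈ Ioo (-1 : ℝ) 1 := by norm_num
  -- derivative of α
  have hαderiv : ∀ x ∈ Ioo (-1 : ℝ) 1, HasDerivAt α (1 / g x) x := by
    intro x hx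
    have hsub : uIcc (0 : ℝ) x ⊆ Ioo (-1 : ℝ) 1 :=
      Set.ordConnected_Ioo.uIcc_subset h0mem hx
    have h1 : HasDerivAt (fun u => ∫ z in (0 : ℝ)..u, 1 / g z) (1 / g x) x := by
      apply intervalIntegral.integral_hasDerivAt_right
      · exact (hinv.mono hsub).intervalIntegrable
      · exact hinv.stronglyMeasurableAtFilter hsopen x hx
      · exact hinv.continuousAt (hsopen.mem_nhds hx)
    exact h1.congr_of_eventuallyEq (Filter.Eventually.of_forall fun u => (hα u))
  -- α strictly monotone on Ioo
  have hαmono : StrictMonoOn α (Ioo (-1 : ℝ) 1) := by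
    apply strictMonoOn_of_deriv_pos (convex_Ioo _ _)
    · exact fun x hx => (hαderiv x hx).continuousAt.continuousWithinAt
    · intro x hx
      rw [interior_Ioo] at hx
      rw [(hαderiv x hx).deriv]
      exact div_pos one_pos (hg_pos x hx)
  -- β strictly monotone
  have hβmono : StrictMono β := by
    intro y₁ y₂ h
    rw [← hαβ y₁, ← hαβ y₂] at h
    exact (hαmono.lt_iff_lt (hβ_mem y₁) (hβ_mem y₂)).mp h
  have hrange : β '' univ = Ioo (-1 : ℝ) 1 := by
    apply subset_antisymm
    · rintro _ ⟨y, -, rfl⟩; exact hβ_mem y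
    · intro x hx; exact ⟨α x, trivial, hβα x hx⟩
  have hβcont : ∀ y, ContinuousAt β y := by
    intro y
    apply continuousAt_of_monotoneOn_of_image_mem_nhds
      (fun u _ v _ h => hβmono.monotone h) Filter.univ_mem
    rw [hrange]
    exact hsopen.mem_nhds (hβ_mem y)
  -- derivative of β
  have hβderiv : ∀ y, HasDerivAt β (g (β y)) y := by
    intro y
    have h1 : HasDerivAt α (1 / g (β y)) (β y) := hαderiv _ (hβ_mem y)
    have h2 := HasDerivAt.of_local_left_inverse (hβcont y) h1
      (by simpa [one_div] using inv_ne_zero (hgne _ (hβ_mem y)))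
      (Filter.Eventually.of_forall hαβ)
    simpa [one_div, inv_inv] using h2
  have hG : ∀ y, HasDerivAt (fun y => g (β y)) (deriv g (β y) * g (β y)) y := fun y =>
    (hgdiff _ (hβ_mem y)).comp y (hβderiv y)
  -- derivative of a
  have haderiv : ∀ y, HasDerivAt a (-(deriv g (β y)) / g (β y)) y := by
    intro y
    have hne : g (β y) ≠ 0 := hgne _ (hβ_mem y)
    have h2 := (hG y).inv hne
    have ha_eq : a = fun y => (g (β y))⁻¹ := funext fun y => by rw [ha y, one_div]
    rw [ha_eq]
    refine h2.congr_deriv ?_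
    field_simp
  have hda : deriv a = fun y => -(deriv g (β y)) / g (β y) := funext fun y => (haderiv y).deriv
  -- second derivative of a
  have ha2deriv : ∀ y, HasDerivAt (deriv a)
      ((deriv g (β y) ^ 2 - deriv (deriv g) (β y) * g (β y)) / g (β y)) y := by
    intro y
    have hne : g (β y) ≠ 0 := hgne _ (hβ_mem y)
    rw [hda]
    have hN : HasDerivAt (fun y => -(deriv g (β y))) (-(deriv (deriv g) (β y) * g (β y))) y :=
      ((hdgdiff _ (hβ_mem y)).comp y (hβderiv y)).neg
    have h3 := hN.div (hG y) hne
    refine h3.congr_deriv ?_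
    field_simp
    ring
  have h2 : ∀ y, deriv (deriv a) y
      = (deriv g (β y) ^ 2 - deriv (deriv g) (β y) * g (β y)) / g (β y) :=
    fun y => (ha2deriv y).deriv
  constructor
  · intro x hx
    have hx' : deriv (deriv a) (α x) = (deriv g x ^ 2 - deriv (deriv g) x * g x) / g x := by
      rw [h2 (α x), hβα x hx]
    refine ⟨hx', ?_⟩
    rw [hx', ha (α x), hβα x hx]
    field_simp
    exact mul_div_cancel_left₀ _ (hgne x hx)
  · intro C_g hC
    constructor
    · apply convexOn_of_deriv2_nonneg convex_univ
      · exact fun y _ => (haderiv y).continuousAt.continuousWithinAt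
      · exact fun y _ => (haderiv y).differentiableAt.differentiableWithinAt
      · exact fun y _ => (ha2deriv y).differentiableAt.differentiableWithinAt
      · intro y _
        have : deriv^[2] a y = deriv (deriv a) y := rfl
        rw [this, h2 y]
        have h4 := (hC _ (hβ_mem y)).1
        apply div_nonneg _ (hg_pos _ (hβ_mem y)).le
        nlinarith [h4]
    · intro y
      have hne : g (β y) ≠ 0 := hgne _ (hβ_mem y)
      have h5 := hC _ (hβ_mem y)
      have heq : (deriv g (β y) ^ 2 - deriv (deriv g) (β y) * g (β y)) / g (β y) / (1 / g (β y))
          = deriv g (β y) ^ 2 - deriv (deriv g) (β y) * g (β y) := by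
        field_simp
      rw [h2 y, ha y, heq]
      nlinarith [h5.2]
end

section
/- Let g(x) = (1-x²)^{p/2} with p ≥ 2, α(x) = ∫₀ˣ 1/g, a(y) = 1/g(α⁻¹(y)). Then for all y ∈ ℝ, a'(y)/a(y) = p · α⁻¹(y) · (1-(α⁻¹(y))²)^{p/2-1}, and hence |a'(y)/a(y)| ≤ p. -/
open Set MeasureTheory

theorem a_ratio_formula_power_mobility
    (p : ℝ) (hp : 2 ≤ p)
    (α β : ℝ → ℝ)
    (hα : ∀ x, α x = ∫ z in (0 : ℝ)..x, (1 - z ^ 2) ^ (-(p / 2)))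
    (hβ_mem : ∀ y, β y ∈ Ioo (-1 : ℝ) 1)
    (hβα : ∀ x ∈ Ioo (-1 : ℝ) 1, β (α x) = x)
    (hαβ : ∀ y, α (β y) = y)
    (a : ℝ → ℝ) (ha : ∀ y, a y = (1 - (β y) ^ 2) ^ (-(p / 2))) :
    ∀ y : ℝ,
      deriv a y / a y = p * β y * (1 - (β y) ^ 2) ^ (p / 2 - 1) ∧
      |deriv a y / a y| ≤ p := by
  have hp0 : 0 < p := by linarith
  set F : ℝ → ℝ := fun z => (1 - z ^ 2) ^ (-(p / 2)) with hF
  have hpos : ∀ z ∈ Ioo (-1 : ℝ) 1, (0 : ℝ) < 1 - z ^ 2 := by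
    intro z hz; nlinarith [hz.1, hz.2]
  have hFpos : ∀ z ∈ Ioo (-1 : ℝ) 1, 0 < F z := fun z hz =>
    Real.rpow_pos_of_pos (hpos z hz) _
  have hcont : ContinuousOn F (Ioo (-1 : ℝ) 1) := by
    apply ContinuousOn.rpow_const
    · exact (continuousOn_const.sub (continuousOn_pow 2))
    · intro z hz; exact Or.inl (hpos z hz).ne'
  have h0mem : (0 : ℝ) ∈ Ioo (-1 : ℝ) 1 := by constructor <;> norm_num
  have hsub : ∀ x ∈ Ioo (-1 : ℝ) 1, Set.uIcc (0 : ℝ) x ⊆ Ioo (-1 : ℝ) 1 := fun x hx =>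
    Set.OrdConnected.uIcc_subset Set.ordConnected_Ioo h0mem hx
  have hint : ∀ x ∈ Ioo (-1 : ℝ) 1, IntervalIntegrable F volume 0 x := fun x hx =>
    (hcont.mono (hsub x hx)).intervalIntegrable
  -- derivative of α
  have hαderiv : ∀ x ∈ Ioo (-1 : ℝ) 1, HasDerivAt α (F x) x := by
    intro x hx
    have h1 : HasDerivAt (fun u => ∫ z in (0 : ℝ)..u, F z) (F x) x :=
      intervalIntegral.integral_hasDerivAt_right (hint x hx)
        (hcont.stronglyMeasurableAtFilter isOpen_Ioo x hx)
        (hcont.continuousAt (isOpen_Ioo.mem_nhds hx))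
    have : α = fun u => ∫ z in (0 : ℝ)..u, F z := funext hα
    rw [this]
    exact h1
  -- α is strictly monotone on Ioo
  have hαmono : StrictMonoOn α (Ioo (-1 : ℝ) 1) := by
    apply StrictMonoOn.mono (s := Ioo (-1 : ℝ) 1) ?_ (le_refl _)
    apply strictMonoOn_of_deriv_pos (convex_Ioo _ _)
    · intro x hx
      exact (hαderiv x hx).continuousAt.continuousWithinAt
    · intro x hx
      rw [interior_Ioo] at hx
      rw [(hαderiv x hx).deriv]
      exact hFpos x hx
  -- β is strictly monotone
  have hβmono : StrictMono β := by
    intro y1 y2 h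
    by_contra h'
    push_neg at h'
    have : α (β y2) ≤ α (β y1) := by
      rcases eq_or_lt_of_le h' with h'' | h''
      · rw [h'']
      · exact (hαmono (hβ_mem y2) (hβ_mem y1) h'').le
    rw [hαβ, hαβ] at this
    linarith
  -- range of β is Ioo
  have hrange : β '' univ = Ioo (-1 : ℝ) 1 := by
    apply subset_antisymm
    · rintro _ ⟨y, -, rfl⟩; exact hβ_mem y
    · intro x hx; exact ⟨α x, mem_univ _, hβα x hx⟩
  -- β is continuous
  have hβcont : ∀ y, ContinuousAt β y := by
    intro y
    apply StrictMonoOn.continuousAt_of_image_mem_nhds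
      (fun u _ v _ huv => hβmono huv) Filter.univ_mem
    rw [hrange]
    exact isOpen_Ioo.mem_nhds (hβ_mem y)
  -- derivative of β
  have hβderiv : ∀ y, HasDerivAt β ((F (β y))⁻¹) y := by
    intro y
    exact HasDerivAt.of_local_left_inverse (hβcont y) (hαderiv (β y) (hβ_mem y))
      (hFpos (β y) (hβ_mem y)).ne' (Filter.Eventually.of_forall hαβ)
  intro y
  set x := β y with hx
  have hxm := hβ_mem y
  have hbpos : (0 : ℝ) < 1 - x ^ 2 := hpos x hxm
  -- derivative of a
  have haderiv : HasDerivAt a (p * x * (1 - x ^ 2)⁻¹) y := by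
    have h1 : HasDerivAt (fun t : ℝ => 1 - t ^ 2) (-(2 * x)) x := by
      simpa using ((hasDerivAt_pow 2 x).const_sub 1)
    have h2 : HasDerivAt (fun t : ℝ => (1 - t ^ 2) ^ (-(p / 2)))
        (-(p / 2) * (1 - x ^ 2) ^ (-(p / 2) - 1) * (-(2 * x))) x := by
      exact (Real.hasDerivAt_rpow_const (Or.inl hbpos.ne')).comp x h1
    have h3 := (h2.comp y (hβderiv y))
    have haa : a = fun y => (1 - (β y) ^ 2) ^ (-(p / 2)) := funext ha
    rw [haa]
    refine h3.congr_deriv ?_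
    have hFinv : (F (β y))⁻¹ = (1 - x ^ 2) ^ (p / 2) := by
      show ((1 - x ^ 2) ^ (-(p / 2)))⁻¹ = _
      rw [Real.rpow_neg hbpos.le, inv_inv]
    rw [hFinv]
    have hcomb : (1 - x ^ 2) ^ (-(p / 2) - 1) * (1 - x ^ 2) ^ (p / 2) = (1 - x ^ 2)⁻¹ := by
      rw [← Real.rpow_add hbpos, show -(p / 2) - 1 + p / 2 = (-1 : ℝ) by ring,
        Real.rpow_neg_one]
    linear_combination (p * x) * hcomb
  have hderiv_val : deriv a y = p * x * (1 - x ^ 2)⁻¹ := haderiv.deriv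
  have haval : a y = (1 - x ^ 2) ^ (-(p / 2)) := ha y
  have hane : a y ≠ 0 := by rw [haval]; exact (Real.rpow_pos_of_pos hbpos _).ne'
  have hratio : deriv a y / a y = p * x * (1 - x ^ 2) ^ (p / 2 - 1) := by
    rw [hderiv_val, haval]
    rw [← Real.rpow_neg_one (1 - x ^ 2), div_eq_iff (Real.rpow_pos_of_pos hbpos _).ne']
    rw [mul_assoc, mul_assoc, ← Real.rpow_add hbpos]
    ring_nf
  refine ⟨hratio, ?_⟩
  rw [hratio]
  have hx1 : |x| ≤ 1 := by
    rw [abs_le]; exact ⟨hxm.1.le, hxm.2.le⟩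
  have hq : (1 - x ^ 2) ^ (p / 2 - 1) ≤ 1 := by
    apply Real.rpow_le_one hbpos.le (by nlinarith [sq_nonneg x]) (by linarith)
  have hqpos : (0 : ℝ) < (1 - x ^ 2) ^ (p / 2 - 1) := Real.rpow_pos_of_pos hbpos _
  rw [abs_mul, abs_mul, abs_of_pos hp0, abs_of_pos hqpos]
  calc p * |x| * (1 - x ^ 2) ^ (p / 2 - 1) ≤ p * 1 * 1 := by
        apply mul_le_mul (mul_le_mul le_rfl hx1 (abs_nonneg _) hp0.le) hq hqpos.le
          (by positivity)
    _ = p := by ring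
end

section
/- Let g(x) = (1-x²)^{p/2} with p ≥ 2 and a as above. Then a''(y)/a(y) = p(1+(α⁻¹(y))²)(1-(α⁻¹(y))²)^{p-2} for all y ∈ ℝ, and hence a''/a is bounded on ℝ (by 2p). Moreover, if p ≥ 4 then a''(y) = p(1+(α⁻¹(y))²)(1-(α⁻¹(y))²)^{p/2-2} is bounded on ℝ. -/
open Set MeasureTheory

theorem a_second_derivative_power_mobility
    (p : ℝ) (hp : 2 ≤ p)
    (α β : ℝ → ℝ)
    (hα : ∀ x, α x = ∫ z in (0 : ℝ)..x, (1 - z ^ 2) ^ (-(p / 2)))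
    (hβ_mem : ∀ y, β y ∈ Ioo (-1 : ℝ) 1)
    (hβα : ∀ x ∈ Ioo (-1 : ℝ) 1, β (α x) = x)
    (hαβ : ∀ y, α (β y) = y)
    (a : ℝ → ℝ) (ha : ∀ y, a y = (1 - (β y) ^ 2) ^ (-(p / 2))) :
    (∀ y : ℝ,
      deriv (deriv a) y / a y = p * (1 + (β y) ^ 2) * (1 - (β y) ^ 2) ^ (p - 2) ∧
      deriv (deriv a) y / a y ≤ 2 * p) ∧
    (4 ≤ p →
      (∀ y : ℝ,
        deriv (deriv a) y = p * (1 + (β y) ^ 2) * (1 - (β y) ^ 2) ^ (p / 2 - 2)) ∧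
      ∃ M : ℝ, ∀ y : ℝ, |deriv (deriv a) y| ≤ M) := by
  have hpos : ∀ y, 0 < 1 - (β y) ^ 2 := by
    intro y
    have h := hβ_mem y
    nlinarith [h.1, h.2]
  have hposx : ∀ x ∈ Ioo (-1 : ℝ) 1, 0 < 1 - x ^ 2 := by
    intro x hx; nlinarith [hx.1, hx.2]
  -- continuity of the integrand on Ioo (-1) 1
  have hcont : ContinuousOn (fun z : ℝ => (1 - z ^ 2) ^ (-(p / 2))) (Ioo (-1 : ℝ) 1) := by
    apply ContinuousOn.rpow_const
    · exact (continuous_const.sub (continuous_pow 2)).continuousOn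
    · intro z hz; exact Or.inl (ne_of_gt (hposx z hz))
  have hαfun : α = fun x => ∫ z in (0 : ℝ)..x, (1 - z ^ 2) ^ (-(p / 2)) := funext hα
  -- derivative of α on Ioo
  have hderivα : ∀ x ∈ Ioo (-1 : ℝ) 1, HasDerivAt α ((1 - x ^ 2) ^ (-(p / 2))) x := by
    intro x hx
    rw [hαfun]
    have h0 : (0 : ℝ) ∈ Ioo (-1 : ℝ) 1 := by constructor <;> norm_num
    have hsub : uIcc (0 : ℝ) x ⊆ Ioo (-1 : ℝ) 1 := by
      exact (Set.ordConnected_Ioo).uIcc_subset h0 hx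
    have hint : IntervalIntegrable (fun z : ℝ => (1 - z ^ 2) ^ (-(p / 2))) volume 0 x :=
      (hcont.mono hsub).intervalIntegrable
    exact intervalIntegral.integral_hasDerivAt_right hint
      (hcont.stronglyMeasurableAtFilter isOpen_Ioo x hx)
      ((hcont x hx).continuousAt (isOpen_Ioo.mem_nhds hx))
  -- α is strictly monotone on Ioo
  have hmono : StrictMonoOn α (Ioo (-1 : ℝ) 1) := by
    apply StrictMonoOn.mono (s := Ioo (-1 : ℝ) 1) ?_ (subset_refl _)
    apply strictMonoOn_of_deriv_pos (convex_Ioo _ _)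
    · intro x hx
      exact (hderivα x hx).continuousAt.continuousWithinAt
    · intro x hx
      rw [interior_Ioo] at hx
      rw [(hderivα x hx).deriv]
      exact Real.rpow_pos_of_pos (hposx x hx) _
  -- β is strictly monotone
  have hβmono : StrictMono β := by
    intro y1 y2 h
    by_contra hle
    push_neg at hle
    rcases eq_or_lt_of_le hle with heq | hlt
    · have := congrArg α heq
      rw [hαβ, hαβ] at this
      linarith [this.le]
    · have := hmono (hβ_mem y2) (hβ_mem y1) hlt
      rw [hαβ, hαβ] at this
      exact absurd h (not_lt.2 this.le)
  -- β is continuous via an order isomorphism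
  have hβcont : Continuous β := by
    have hsm : StrictMono (fun y => (⟨β y, hβ_mem y⟩ : Ioo (-1 : ℝ) 1)) := by
      intro y1 y2 h
      exact Subtype.mk_lt_mk.2 (hβmono h)
    have hsurj : Function.Surjective (fun y => (⟨β y, hβ_mem y⟩ : Ioo (-1 : ℝ) 1)) := by
      rintro ⟨x, hx⟩
      exact ⟨α x, Subtype.ext (hβα x hx)⟩
    have hb : β = (fun t : Ioo (-1 : ℝ) 1 => (t : ℝ))
        ∘ ⇑(StrictMono.orderIsoOfSurjective _ hsm hsurj) := by
      funext y
      simp [StrictMono.coe_orderIsoOfSurjective]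
    rw [hb]
    exact continuous_subtype_val.comp
      (StrictMono.orderIsoOfSurjective _ hsm hsurj).continuous
  -- derivative of β
  have hβderiv : ∀ y, HasDerivAt β ((1 - (β y) ^ 2) ^ (p / 2)) y := by
    intro y
    have h1 : HasDerivAt α ((1 - (β y) ^ 2) ^ (-(p / 2))) (β y) := hderivα _ (hβ_mem y)
    have h2 := HasDerivAt.of_local_left_inverse hβcont.continuousAt h1
      (ne_of_gt (Real.rpow_pos_of_pos (hpos y) _))
      (Filter.Eventually.of_forall hαβ)
    convert h2 using 1
    case e'_4 => rfl
    rw [Real.rpow_neg (hpos y).le, inv_inv]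
  -- derivative of 1 - β^2
  have huderiv : ∀ y, HasDerivAt (fun y => 1 - (β y) ^ 2)
      (-(2 * β y * ((1 - (β y) ^ 2) ^ (p / 2)))) y := by
    intro y
    have h := (hβderiv y).pow 2
    have := (hasDerivAt_const y (1 : ℝ)).sub h
    convert this using 1
    case e'_4 => rfl
    case e'_5 => rfl
    case e'_8 => rfl
    push_cast
    ring
  -- first derivative of a
  have haderiv : ∀ y, HasDerivAt a (p * β y * (1 - (β y) ^ 2)⁻¹) y := by
    intro y
    have h2 := (huderiv y).rpow_const (p := -(p / 2)) (Or.inl (ne_of_gt (hpos y)))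
    have hafun : a = fun y => (1 - (β y) ^ 2) ^ (-(p / 2)) := funext ha
    rw [hafun]
    convert h2 using 1
    have : (1 - (β y) ^ 2) ^ (-(p / 2) - 1)
        = (1 - (β y) ^ 2) ^ (-(p / 2)) * (1 - (β y) ^ 2)⁻¹ := by
      rw [show -(p / 2) - 1 = -(p / 2) + (-1) by ring, Real.rpow_add (hpos y),
        Real.rpow_neg_one]
    rw [this]
    have hmul : (1 - (β y) ^ 2) ^ (p / 2) * (1 - (β y) ^ 2) ^ (-(p / 2)) = 1 := by
      rw [← Real.rpow_add (hpos y)]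
      simp
    calc p * β y * (1 - (β y) ^ 2)⁻¹
        = (2 * β y * (p / 2)) * (((1 - (β y) ^ 2) ^ (p / 2) * (1 - (β y) ^ 2) ^ (-(p / 2)))
            * (1 - (β y) ^ 2)⁻¹) := by rw [hmul]; ring
      _ = -(2 * β y * (1 - (β y) ^ 2) ^ (p / 2)) * -(p / 2)
            * ((1 - (β y) ^ 2) ^ (-(p / 2)) * (1 - (β y) ^ 2)⁻¹) := by ring
  have hderiva : deriv a = fun y => p * β y * (1 - (β y) ^ 2)⁻¹ :=
    funext fun y => (haderiv y).deriv
  -- second derivative of a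
  have ha2 : ∀ y, HasDerivAt (deriv a)
      (p * (1 + (β y) ^ 2) * (1 - (β y) ^ 2) ^ (p / 2 - 2)) y := by
    intro y
    rw [hderiva]
    have hinv := (huderiv y).inv (ne_of_gt (hpos y))
    have hf := ((hβderiv y).const_mul p).mul hinv
    convert hf using 1
    case e'_4 => rfl
    case e'_5 => rfl
    case e'_8 => rfl
    simp only [Pi.inv_apply]
    set u := 1 - (β y) ^ 2 with hu
    set t := u ^ (p / 2) with ht
    have hu0 : u ≠ 0 := ne_of_gt (hpos y)
    have hsplit : u ^ (p / 2 - 2) = t * (u ^ 2)⁻¹ := by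
      rw [ht, show p / 2 - 2 = p / 2 + (-2 : ℝ) by ring, Real.rpow_add (hpos y)]
      congr 1
      rw [show (-2 : ℝ) = -(2 : ℕ) by norm_num, Real.rpow_neg (hpos y).le,
        Real.rpow_natCast]
    rw [hsplit]
    field_simp
    ring
  have hderiva2 : ∀ y, deriv (deriv a) y
      = p * (1 + (β y) ^ 2) * (1 - (β y) ^ 2) ^ (p / 2 - 2) :=
    fun y => (ha2 y).deriv
  have hule1 : ∀ y, 1 - (β y) ^ 2 ≤ 1 := by
    intro y; nlinarith [sq_nonneg (β y)]
  have hratio : ∀ y, deriv (deriv a) y / a y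
      = p * (1 + (β y) ^ 2) * (1 - (β y) ^ 2) ^ (p - 2) := by
    intro y
    rw [hderiva2 y, ha y, Real.rpow_neg (hpos y).le, div_eq_mul_inv, inv_inv,
      mul_assoc, mul_assoc, ← Real.rpow_add (hpos y),
      show p / 2 - 2 + p / 2 = p - 2 by ring, ← mul_assoc]
  have hp0 : (0 : ℝ) ≤ p := by linarith
  refine ⟨fun y => ⟨hratio y, ?_⟩, fun hp4 => ⟨hderiva2, ⟨2 * p, fun y => ?_⟩⟩⟩
  · rw [hratio y]
    have h1 : (1 - (β y) ^ 2) ^ (p - 2) ≤ 1 :=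
      Real.rpow_le_one (hpos y).le (hule1 y) (by linarith)
    have h2 : (0 : ℝ) ≤ (1 - (β y) ^ 2) ^ (p - 2) := Real.rpow_nonneg (hpos y).le _
    have hs2 : 1 + (β y) ^ 2 ≤ 2 := by nlinarith [(hβ_mem y).1, (hβ_mem y).2]
    have hs0 : (0 : ℝ) ≤ 1 + (β y) ^ 2 := by positivity
    calc p * (1 + (β y) ^ 2) * (1 - (β y) ^ 2) ^ (p - 2)
        ≤ p * (1 + (β y) ^ 2) * 1 :=
          mul_le_mul_of_nonneg_left h1 (mul_nonneg hp0 hs0)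
      _ = p * (1 + (β y) ^ 2) := by ring
      _ ≤ p * 2 := mul_le_mul_of_nonneg_left hs2 hp0
      _ = 2 * p := by ring
  · rw [hderiva2 y]
    have h1 : (1 - (β y) ^ 2) ^ (p / 2 - 2) ≤ 1 :=
      Real.rpow_le_one (hpos y).le (hule1 y) (by linarith)
    have h2 : (0 : ℝ) ≤ (1 - (β y) ^ 2) ^ (p / 2 - 2) := Real.rpow_nonneg (hpos y).le _
    have hs2 : 1 + (β y) ^ 2 ≤ 2 := by nlinarith [(hβ_mem y).1, (hβ_mem y).2]
    have hs0 : (0 : ℝ) ≤ 1 + (β y) ^ 2 := by positivity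
    rw [abs_of_nonneg (by positivity)]
    calc p * (1 + (β y) ^ 2) * (1 - (β y) ^ 2) ^ (p / 2 - 2)
        ≤ p * (1 + (β y) ^ 2) * 1 :=
          mul_le_mul_of_nonneg_left h1 (mul_nonneg hp0 hs0)
      _ = p * (1 + (β y) ^ 2) := by ring
      _ ≤ p * 2 := mul_le_mul_of_nonneg_left hs2 hp0
      _ = 2 * p := by ring
end

section
/- Let μ₁, μ₂ be probability measures on ℝ with finite second moments, with quantile (pseudo-inverse of the CDF) functions Y₁, Y₂ : (0,1) → ℝ. Then the 2-Wasserstein distance satisfies W₂²(μ₁,μ₂) = ∫₀¹ (Y₁(ω) - Y₂(ω))² dω. -/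
open Set MeasureTheory
open scoped ENNReal

/-- The squared 2-Wasserstein distance between two probability measures on `ℝ`,
defined as the infimum of the transport cost over all couplings. -/
noncomputable def W2sq (μ₁ μ₂ : Measure ℝ) : ℝ≥0∞ :=
  ⨅ (π : Measure (ℝ × ℝ)) (_ : π.map Prod.fst = μ₁) (_ : π.map Prod.snd = μ₂),
    ∫⁻ p, ENNReal.ofReal ((p.1 - p.2) ^ 2) ∂π

/-- The pseudo-inverse (quantile function) of the CDF of a measure on `ℝ`:
`Y μ ω = inf {y : μ((-∞, y]) > ω}`. -/
noncomputable def quantileFun (μ : Measure ℝ) (ω : ℝ) : ℝ :=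
  sInf {y : ℝ | ω < (μ (Iic y)).toReal}

/-!
The quantile function pushes Lebesgue measure on `(0, 1)` forward to `μ`, so
`ω ↦ (Y₁ ω, Y₂ ω)` is a coupling of `μ₁` and `μ₂` (the comonotone one) whose cost is the
right-hand side. Expanding `(x - y)²`, optimality amounts to the comonotone coupling
maximising `∫ x y dπ`. Hoeffding's identity `x y = ∬ layer x s * layer y t ds dt`, where
`layer x s = 1_{s<x} - 1_{s<0}`, turns `∫ x y dπ` into `∬ π((s, ∞) × (t, ∞)) ds dt` plus
terms fixed by the marginals, and `π((s, ∞) × (t, ∞)) ≤ min (μ₁ (s, ∞)) (μ₂ (t, ∞))` for every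
coupling, with equality for the comonotone one.
-/

open ProbabilityTheory Function

section Quantile

variable {μ : Measure ℝ} {ω y : ℝ}

lemma nonempty_setOf_lt_cdf (hω : ω < 1) : {y | ω < cdf μ y}.Nonempty :=
  ((tendsto_order.1 (tendsto_cdf_atTop μ)).1 ω hω).exists

lemma bddBelow_setOf_lt_cdf (hω : 0 < ω) : BddBelow {y | ω < cdf μ y} := by
  obtain ⟨y₀, hy₀⟩ := ((tendsto_order.1 (tendsto_cdf_atBot μ)).2 ω hω).exists
  exact ⟨y₀, fun y hy => le_of_not_ge fun hyy₀ => (monotone_cdf μ hyy₀).not_gt (hy₀.trans hy)⟩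

variable [IsProbabilityMeasure μ]

lemma quantileFun_eq_sInf_cdf : quantileFun μ ω = sInf {y | ω < cdf μ y} := by
  simp only [quantileFun, cdf_eq_real, measureReal_def]

lemma measureReal_Ioi_eq_one_sub_cdf (s : ℝ) : μ.real (Ioi s) = 1 - cdf μ s := by
  rw [← compl_Iic, probReal_compl_eq_one_sub measurableSet_Iic, cdf_eq_real]

lemma quantileFun_le_of_lt_cdf (hω : 0 < ω) (h : ω < cdf μ y) : quantileFun μ ω ≤ y := by
  rw [quantileFun_eq_sInf_cdf]
  exact csInf_le (bddBelow_setOf_lt_cdf hω) h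

lemma le_cdf_of_quantileFun_le (hω : ω < 1) (h : quantileFun μ ω ≤ y) : ω ≤ cdf μ y := by
  by_contra! hy
  -- right-continuity of the cdf yields `z > y` with `cdf μ z < ω`, a lower bound of the set
  obtain ⟨z, hzω, hyz⟩ := ((((cdf μ).right_continuous y).mono Ioi_subset_Ici_self).eventually
    (gt_mem_nhds hy)).and self_mem_nhdsWithin |>.exists
  have : z ≤ quantileFun μ ω := by
    rw [quantileFun_eq_sInf_cdf]
    exact le_csInf (nonempty_setOf_lt_cdf hω) fun x hx =>
      le_of_not_ge fun hxz => (monotone_cdf μ hxz).not_gt (hzω.trans hx)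
  exact (hyz.trans_le this).not_ge h

lemma monotoneOn_quantileFun : MonotoneOn (quantileFun μ) (Ioo 0 1) := by
  intro a ha b hb hab
  simp only [quantileFun_eq_sInf_cdf]
  exact csInf_le_csInf (bddBelow_setOf_lt_cdf ha.1) (nonempty_setOf_lt_cdf hb.2)
    fun y hy => hab.trans_lt hy

lemma aemeasurable_quantileFun : AEMeasurable (quantileFun μ) (volume.restrict (Ioo 0 1)) :=
  aemeasurable_restrict_of_monotoneOn measurableSet_Ioo monotoneOn_quantileFun

lemma map_quantileFun_volume_Ioo : (volume.restrict (Ioo 0 1)).map (quantileFun μ) = μ := by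
  have : IsFiniteMeasure (volume.restrict (Ioo (0 : ℝ) 1)) :=
    isFiniteMeasure_restrict.2 measure_Ioo_lt_top.ne
  refine Measure.ext_of_Iic _ _ fun y => ?_
  rw [Measure.map_apply_of_aemeasurable aemeasurable_quantileFun measurableSet_Iic,
    Measure.restrict_apply' measurableSet_Ioo, ← ofReal_cdf]
  refine le_antisymm ?_ ?_
  · calc volume (quantileFun μ ⁻¹' Iic y ∩ Ioo 0 1) ≤ volume (Ioc 0 (cdf μ y)) :=
          measure_mono fun ω hω => ⟨hω.2.1, le_cdf_of_quantileFun_le hω.2.2 hω.1⟩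
      _ = _ := by simp
  · calc ENNReal.ofReal (cdf μ y) = volume (Ioo 0 (cdf μ y)) := by simp
      _ ≤ volume (quantileFun μ ⁻¹' Iic y ∩ Ioo 0 1) := measure_mono fun ω hω =>
          ⟨quantileFun_le_of_lt_cdf hω.1 hω.2, hω.1, hω.2.trans_le (cdf_le_one μ y)⟩

end Quantile

section Coupling

variable {α β : Type*} [MeasurableSpace α] [MeasurableSpace β]

structure IsCoupling (π : Measure (α × β)) (μ : Measure α) (ν : Measure β) : Prop where
  map_fst : π.map Prod.fst = μ
  map_snd : π.map Prod.snd = ν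

namespace IsCoupling

variable {π : Measure (α × β)} {μ : Measure α} {ν : Measure β}

lemma isFiniteMeasure (hπ : IsCoupling π μ ν) [IsFiniteMeasure μ] : IsFiniteMeasure π := by
  rw [← hπ.map_fst] at *
  exact Measure.isFiniteMeasure_of_map measurable_fst.aemeasurable

lemma isProbabilityMeasure (hπ : IsCoupling π μ ν) [IsProbabilityMeasure μ] :
    IsProbabilityMeasure π := by
  rw [← hπ.map_fst] at *
  exact Measure.isProbabilityMeasure_of_map Prod.fst

lemma measureReal_fst_preimage (hπ : IsCoupling π μ ν) {s : Set α} (hs : MeasurableSet s) :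
    π.real (Prod.fst ⁻¹' s) = μ.real s := by
  rw [← hπ.map_fst, measureReal_def, measureReal_def, Measure.map_apply measurable_fst hs]

lemma measureReal_snd_preimage (hπ : IsCoupling π μ ν) {t : Set β} (ht : MeasurableSet t) :
    π.real (Prod.snd ⁻¹' t) = ν.real t := by
  rw [← hπ.map_snd, measureReal_def, measureReal_def, Measure.map_apply measurable_snd ht]

lemma measureReal_prod_le (hπ : IsCoupling π μ ν) [IsFiniteMeasure μ]
    {s : Set α} {t : Set β} (hs : MeasurableSet s) (ht : MeasurableSet t) :
    π.real (s ×ˢ t) ≤ min (μ.real s) (ν.real t) := by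
  have := hπ.isFiniteMeasure
  rw [← hπ.measureReal_fst_preimage hs, ← hπ.measureReal_snd_preimage ht]
  exact le_min (measureReal_mono fun p hp => hp.1) (measureReal_mono fun p hp => hp.2)

variable {E F : Type*} [NormedAddCommGroup E] [NormedAddCommGroup F] {p : ℝ≥0∞}

lemma memLp_comp_fst (hπ : IsCoupling π μ ν) {f : α → E} (hf : MemLp f p μ) :
    MemLp (fun x => f x.1) p π :=
  (hπ.map_fst ▸ hf).comp_of_map measurable_fst.aemeasurable

lemma memLp_comp_snd (hπ : IsCoupling π μ ν) {g : β → F} (hg : MemLp g p ν) :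
    MemLp (fun x => g x.2) p π :=
  (hπ.map_snd ▸ hg).comp_of_map measurable_snd.aemeasurable

variable {G : Type*} [NormedAddCommGroup G] [NormedSpace ℝ G]

lemma integral_comp_fst (hπ : IsCoupling π μ ν) {f : α → G} (hf : AEStronglyMeasurable f μ) :
    ∫ p, f p.1 ∂π = ∫ x, f x ∂μ := by
  rw [← hπ.map_fst] at hf ⊢
  exact (integral_map measurable_fst.aemeasurable hf).symm

lemma integral_comp_snd (hπ : IsCoupling π μ ν) {g : β → G} (hg : AEStronglyMeasurable g ν) :
    ∫ p, g p.2 ∂π = ∫ y, g y ∂ν := by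
  rw [← hπ.map_snd] at hg ⊢
  exact (integral_map measurable_snd.aemeasurable hg).symm

end IsCoupling

end Coupling

section QuantileCoupling

noncomputable def quantileCoupling (μ₁ μ₂ : Measure ℝ) : Measure (ℝ × ℝ) :=
  (volume.restrict (Ioo 0 1)).map fun ω => (quantileFun μ₁ ω, quantileFun μ₂ ω)

variable {μ₁ μ₂ : Measure ℝ} [IsProbabilityMeasure μ₁] [IsProbabilityMeasure μ₂]

lemma aemeasurable_quantileFun_prodMk :
    AEMeasurable (fun ω => (quantileFun μ₁ ω, quantileFun μ₂ ω)) (volume.restrict (Ioo 0 1)) :=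
  aemeasurable_quantileFun.prodMk aemeasurable_quantileFun

lemma isCoupling_quantileCoupling : IsCoupling (quantileCoupling μ₁ μ₂) μ₁ μ₂ where
  map_fst := by
    rw [quantileCoupling, AEMeasurable.map_map_of_aemeasurable measurable_fst.aemeasurable
      aemeasurable_quantileFun_prodMk]
    exact map_quantileFun_volume_Ioo
  map_snd := by
    rw [quantileCoupling, AEMeasurable.map_map_of_aemeasurable measurable_snd.aemeasurable
      aemeasurable_quantileFun_prodMk]
    exact map_quantileFun_volume_Ioo

lemma quantileCoupling_real_Ioi_prod_Ioi (s t : ℝ) :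
    (quantileCoupling μ₁ μ₂).real (Ioi s ×ˢ Ioi t) = min (μ₁.real (Ioi s)) (μ₂.real (Ioi t)) := by
  refine le_antisymm
    (isCoupling_quantileCoupling.measureReal_prod_le measurableSet_Ioi measurableSet_Ioi) ?_
  set M := max (cdf μ₁ s) (cdf μ₂ t)
  have hM : 0 ≤ M := (cdf_nonneg μ₁ s).trans (le_max_left _ _)
  have hsub : Ioo M 1 ⊆ (fun ω => (quantileFun μ₁ ω, quantileFun μ₂ ω)) ⁻¹' (Ioi s ×ˢ Ioi t)
      ∩ Ioo 0 1 := fun ω hω =>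
    have hω₀ : ω ∈ Ioo 0 1 := ⟨hM.trans_lt hω.1, hω.2⟩
    ⟨⟨lt_of_not_ge fun h => (le_cdf_of_quantileFun_le hω₀.2 h).not_gt
        ((le_max_left _ _).trans_lt hω.1),
      lt_of_not_ge fun h => (le_cdf_of_quantileFun_le hω₀.2 h).not_gt
        ((le_max_right _ _).trans_lt hω.1)⟩, hω₀⟩
  calc min (μ₁.real (Ioi s)) (μ₂.real (Ioi t)) = volume.real (Ioo M 1) := by
        rw [measureReal_Ioi_eq_one_sub_cdf, measureReal_Ioi_eq_one_sub_cdf, min_sub_sub_left,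
          Real.volume_real_Ioo_of_le (max_le (cdf_le_one μ₁ s) (cdf_le_one μ₂ t))]
    _ ≤ (volume.restrict (Ioo 0 1)).real
          ((fun ω => (quantileFun μ₁ ω, quantileFun μ₂ ω)) ⁻¹' (Ioi s ×ˢ Ioi t)) := by
        rw [measureReal_restrict_apply' measurableSet_Ioo]
        exact measureReal_mono hsub
          (measure_ne_top_of_subset inter_subset_right measure_Ioo_lt_top.ne)
    _ = _ := by
        rw [quantileCoupling, map_measureReal_apply_of_aemeasurable
          aemeasurable_quantileFun_prodMk (measurableSet_Ioi.prod measurableSet_Ioi)]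

end QuantileCoupling

section Layer

noncomputable def layer (a s : ℝ) : ℝ := (if s < a then 1 else 0) - if s < 0 then 1 else 0

lemma layer_eq_indicator_sub_indicator (a : ℝ) :
    layer a = (Ico 0 a).indicator 1 - (Ico a 0).indicator 1 := by
  ext s
  simp only [layer, Pi.sub_apply, indicator, mem_Ico, Pi.one_apply]
  split_ifs <;> grind

lemma abs_layer_eq_indicator_add_indicator (a : ℝ) :
    (fun s => |layer a s|) = (Ico 0 a).indicator 1 + (Ico a 0).indicator 1 := by
  ext s
  simp only [layer, Pi.add_apply, indicator, mem_Ico, Pi.one_apply]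
  split_ifs <;> grind

lemma integrable_indicator_one_Ico (a b : ℝ) : Integrable ((Ico a b).indicator (1 : ℝ → ℝ)) :=
  (integrableOn_const measure_Ico_lt_top.ne).integrable_indicator measurableSet_Ico

lemma integrable_layer (a : ℝ) : Integrable (layer a) := by
  rw [layer_eq_indicator_sub_indicator]
  exact (integrable_indicator_one_Ico 0 a).sub (integrable_indicator_one_Ico a 0)

lemma integral_layer (a : ℝ) : ∫ s, layer a s = a := by
  rw [layer_eq_indicator_sub_indicator, integral_sub' (integrable_indicator_one_Ico 0 a)
    (integrable_indicator_one_Ico a 0), integral_indicator_one measurableSet_Ico,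
    integral_indicator_one measurableSet_Ico, Real.volume_real_Ico, Real.volume_real_Ico]
  rcases le_total 0 a with h | h <;> simp [h]

lemma integral_abs_layer (a : ℝ) : ∫ s, |layer a s| = |a| := by
  rw [abs_layer_eq_indicator_add_indicator, integral_add' (integrable_indicator_one_Ico 0 a)
    (integrable_indicator_one_Ico a 0), integral_indicator_one measurableSet_Ico,
    integral_indicator_one measurableSet_Ico, Real.volume_real_Ico, Real.volume_real_Ico]
  rcases le_total 0 a with h | h <;> simp [h, abs_of_nonneg, abs_of_nonpos]

lemma measurable_uncurry_layer : Measurable (uncurry layer) :=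
  (Measurable.ite (measurableSet_lt measurable_snd measurable_fst) measurable_const
    measurable_const).sub
  (Measurable.ite (measurableSet_lt measurable_snd measurable_const) measurable_const
    measurable_const)

end Layer

section LayerCake

variable {π : Measure (ℝ × ℝ)}

lemma integrable_prod_layer_mul_layer (h : Integrable (fun p : ℝ × ℝ => p.1 * p.2) π) :
    Integrable (uncurry fun (p z : ℝ × ℝ) => layer p.1 z.1 * layer p.2 z.2) (π.prod volume) := by
  have hnorm (p : ℝ × ℝ) : ∫ z : ℝ × ℝ, ‖layer p.1 z.1 * layer p.2 z.2‖ = ‖p.1 * p.2‖ := by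
    simp only [norm_mul, Real.norm_eq_abs]
    rw [Measure.volume_eq_prod, integral_prod_mul (fun s => |layer p.1 s|)
      (fun t => |layer p.2 t|), integral_abs_layer, integral_abs_layer]
  refine (integrable_prod_iff ?_).2 ⟨ae_of_all _ fun p => ?_, ?_⟩
  · exact ((measurable_uncurry_layer.comp (measurable_fst.fst.prodMk measurable_snd.fst)).mul
      (measurable_uncurry_layer.comp
        (measurable_fst.snd.prodMk measurable_snd.snd))).aestronglyMeasurable
  · exact (integrable_layer p.1).mul_prod (integrable_layer p.2)
  · simpa only [uncurry_apply_pair, hnorm] using h.norm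

lemma integral_mul_eq_integral_layer_mul_layer [SFinite π]
    (h : Integrable (fun p : ℝ × ℝ => p.1 * p.2) π) :
    ∫ p, p.1 * p.2 ∂π = ∫ z : ℝ × ℝ, ∫ p, layer p.1 z.1 * layer p.2 z.2 ∂π := by
  rw [← integral_integral_swap (integrable_prod_layer_mul_layer h)]
  refine integral_congr_ae (ae_of_all _ fun p => ?_)
  dsimp only
  rw [Measure.volume_eq_prod, integral_prod_mul (layer p.1) (layer p.2), integral_layer,
    integral_layer]

end LayerCake

namespace IsCoupling

variable {μ ν : Measure ℝ} {π : Measure (ℝ × ℝ)}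

lemma integral_layer_mul_layer (hπ : IsCoupling π μ ν) [IsProbabilityMeasure μ] (s t : ℝ) :
    ∫ p, layer p.1 s * layer p.2 t ∂π =
      π.real (Ioi s ×ˢ Ioi t) - (if s < 0 then 1 else 0) * ν.real (Ioi t)
        - (if t < 0 then 1 else 0) * μ.real (Ioi s)
        + (if s < 0 then 1 else 0) * (if t < 0 then 1 else 0) := by
  have := hπ.isProbabilityMeasure
  set a : ℝ := if s < 0 then 1 else 0
  set b : ℝ := if t < 0 then 1 else 0
  have hbox : MeasurableSet (Ioi s ×ˢ Ioi t) := measurableSet_Ioi.prod measurableSet_Ioi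
  have hfst : MeasurableSet (Prod.fst ⁻¹' Ioi s : Set (ℝ × ℝ)) := measurable_fst measurableSet_Ioi
  have hsnd : MeasurableSet (Prod.snd ⁻¹' Ioi t : Set (ℝ × ℝ)) := measurable_snd measurableSet_Ioi
  have hind {S : Set (ℝ × ℝ)} (hS : MeasurableSet S) : Integrable (S.indicator (1 : ℝ × ℝ → ℝ)) π :=
    (integrable_const 1).indicator hS
  calc ∫ p, layer p.1 s * layer p.2 t ∂π
      = ∫ p, ((Ioi s ×ˢ Ioi t).indicator 1 p - a * (Prod.snd ⁻¹' Ioi t).indicator 1 p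
          - b * (Prod.fst ⁻¹' Ioi s).indicator 1 p + a * b) ∂π := by
        congr with p
        simp only [layer, indicator, mem_prod, mem_preimage, mem_Ioi, Pi.one_apply, a, b]
        split_ifs <;> simp_all
    _ = _ := by
        have i₁ := hind hbox
        have i₂ := (hind hsnd).const_mul a
        have i₃ := (hind hfst).const_mul b
        rw [integral_add (by exact (i₁.sub i₂).sub i₃) (integrable_const _),
          integral_sub (by exact i₁.sub i₂) i₃, integral_sub i₁ i₂, integral_const_mul,
          integral_const_mul, integral_indicator_one hbox, integral_indicator_one hfst,
          integral_indicator_one hsnd, hπ.measureReal_fst_preimage measurableSet_Ioi,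
          hπ.measureReal_snd_preimage measurableSet_Ioi, integral_const, probReal_univ, one_smul]

lemma integrable_mul (hπ : IsCoupling π μ ν) (hμ : MemLp id 2 μ) (hν : MemLp id 2 ν) :
    Integrable (fun p : ℝ × ℝ => p.1 * p.2) π :=
  (hπ.memLp_comp_fst hμ).integrable_mul (hπ.memLp_comp_snd hν)

lemma integrable_sub_sq (hπ : IsCoupling π μ ν) (hμ : MemLp id 2 μ) (hν : MemLp id 2 ν) :
    Integrable (fun p : ℝ × ℝ => (p.1 - p.2) ^ 2) π :=
  ((hπ.memLp_comp_fst hμ).sub (hπ.memLp_comp_snd hν)).integrable_sq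

lemma integral_sub_sq (hπ : IsCoupling π μ ν) (hμ : MemLp id 2 μ) (hν : MemLp id 2 ν) :
    ∫ p, (p.1 - p.2) ^ 2 ∂π = ∫ x, x ^ 2 ∂μ + ∫ y, y ^ 2 ∂ν - 2 * ∫ p, p.1 * p.2 ∂π := by
  have h₁ : Integrable (fun p : ℝ × ℝ => p.1 ^ 2) π := (hπ.memLp_comp_fst hμ).integrable_sq
  have h₂ : Integrable (fun p : ℝ × ℝ => p.2 ^ 2) π := (hπ.memLp_comp_snd hν).integrable_sq
  have h₁₂ : Integrable (fun p : ℝ × ℝ => p.1 ^ 2 + p.2 ^ 2) π := h₁.add h₂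
  simp_rw [sub_sq', mul_assoc]
  rw [integral_sub h₁₂ ((hπ.integrable_mul hμ hν).const_mul 2), integral_add h₁ h₂,
    integral_const_mul, hπ.integral_comp_fst (f := (· ^ 2)) (by fun_prop),
    hπ.integral_comp_snd (g := (· ^ 2)) (by fun_prop)]

end IsCoupling

section Optimality

variable {μ₁ μ₂ : Measure ℝ} [IsProbabilityMeasure μ₁] [IsProbabilityMeasure μ₂]
  {π : Measure (ℝ × ℝ)}

lemma IsCoupling.integral_mul_le_quantileCoupling (hπ : IsCoupling π μ₁ μ₂)
    (h₁ : MemLp id 2 μ₁) (h₂ : MemLp id 2 μ₂) :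
    ∫ p, p.1 * p.2 ∂π ≤ ∫ p, p.1 * p.2 ∂quantileCoupling μ₁ μ₂ := by
  have hq : IsCoupling (quantileCoupling μ₁ μ₂) μ₁ μ₂ := isCoupling_quantileCoupling
  have := hπ.isProbabilityMeasure
  have := hq.isProbabilityMeasure
  have hπ_int := hπ.integrable_mul h₁ h₂
  have hq_int := hq.integrable_mul h₁ h₂
  rw [integral_mul_eq_integral_layer_mul_layer hπ_int,
    integral_mul_eq_integral_layer_mul_layer hq_int]
  refine integral_mono (integrable_prod_layer_mul_layer hπ_int).integral_prod_right
    (integrable_prod_layer_mul_layer hq_int).integral_prod_right fun z => ?_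
  rw [hπ.integral_layer_mul_layer, hq.integral_layer_mul_layer, quantileCoupling_real_Ioi_prod_Ioi]
  gcongr
  exact hπ.measureReal_prod_le measurableSet_Ioi measurableSet_Ioi

lemma IsCoupling.lintegral_sub_sq_quantileCoupling_le (hπ : IsCoupling π μ₁ μ₂)
    (h₁ : MemLp id 2 μ₁) (h₂ : MemLp id 2 μ₂) :
    ∫⁻ p, ENNReal.ofReal ((p.1 - p.2) ^ 2) ∂quantileCoupling μ₁ μ₂ ≤
      ∫⁻ p, ENNReal.ofReal ((p.1 - p.2) ^ 2) ∂π := by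
  have hq : IsCoupling (quantileCoupling μ₁ μ₂) μ₁ μ₂ := isCoupling_quantileCoupling
  rw [← ofReal_integral_eq_lintegral_ofReal (hq.integrable_sub_sq h₁ h₂)
      (ae_of_all _ fun _ => sq_nonneg _),
    ← ofReal_integral_eq_lintegral_ofReal (hπ.integrable_sub_sq h₁ h₂)
      (ae_of_all _ fun _ => sq_nonneg _),
    hq.integral_sub_sq h₁ h₂, hπ.integral_sub_sq h₁ h₂]
  exact ENNReal.ofReal_le_ofReal (by linarith [hπ.integral_mul_le_quantileCoupling h₁ h₂])

lemma lintegral_sub_sq_quantileCoupling :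
    ∫⁻ p, ENNReal.ofReal ((p.1 - p.2) ^ 2) ∂quantileCoupling μ₁ μ₂ =
      ∫⁻ ω in Ioo 0 1, ENNReal.ofReal ((quantileFun μ₁ ω - quantileFun μ₂ ω) ^ 2) :=
  lintegral_map' (by fun_prop) aemeasurable_quantileFun_prodMk

end Optimality

lemma memLp_two_id_of_lintegral_sq_lt_top {μ : Measure ℝ}
    (h : ∫⁻ y, ENNReal.ofReal (y ^ 2) ∂μ < ⊤) : MemLp id 2 μ :=
  (memLp_two_iff_integrable_sq aestronglyMeasurable_id).2
    ⟨by fun_prop, (hasFiniteIntegral_iff_ofReal (ae_of_all _ fun y => sq_nonneg y)).2 h⟩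

theorem W2sq_eq_integral_quantile_sub_sq
    (μ₁ μ₂ : Measure ℝ)
    [IsProbabilityMeasure μ₁] [IsProbabilityMeasure μ₂]
    (hm1 : ∫⁻ y, ENNReal.ofReal (y ^ 2) ∂μ₁ < ⊤)
    (hm2 : ∫⁻ y, ENNReal.ofReal (y ^ 2) ∂μ₂ < ⊤) :
    W2sq μ₁ μ₂ =
      ∫⁻ ω in Ioo (0 : ℝ) 1,
        ENNReal.ofReal ((quantileFun μ₁ ω - quantileFun μ₂ ω) ^ 2) := by
  have h₁ := memLp_two_id_of_lintegral_sq_lt_top hm1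
  have h₂ := memLp_two_id_of_lintegral_sq_lt_top hm2
  have hq : IsCoupling (quantileCoupling μ₁ μ₂) μ₁ μ₂ := isCoupling_quantileCoupling
  rw [← lintegral_sub_sq_quantileCoupling]
  refine le_antisymm
    ((iInf₂_le (quantileCoupling μ₁ μ₂) hq.map_fst).trans (iInf_le _ hq.map_snd)) ?_
  exact le_iInf₂ fun π hfst => le_iInf fun hsnd =>
    IsCoupling.lintegral_sub_sq_quantileCoupling_le ⟨hfst, hsnd⟩ h₁ h₂
end
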